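/- Let 𝔸 be a pca in which 0̄ and 1̄ are separable: there is a total c ∈ 𝔸 taking only values 0̄ and 1̄ with c·a = 0̄ ⟹ a ≠ 1̄ and c·a = 1̄ ⟹ a ≠ 0̄. Then there exists b ∈ 𝔸 with no total extension in 𝔸, i.e., no total f ∈ 𝔸 satisfies f·a = b·a whenever b·a↓. -/

import Mathlib

/-- Partial application lifted to `Option` (strict: defined iff both sides defined). -/
def pap {A : Type*} (f : A → A → Option A) (x y : Option A) : Option A :=
  x.bind fun a => y.bind fun b => f a b

/-- A partial combinatory algebra, via Feferman's characterization with combinators `k`, `s`. -/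
structure PCA (A : Type*) where
  app : A → A → Option A
  k : A
  s : A
  k_spec : ∀ a b : A, pap app (pap app (some k) (some a)) (some b) = some a
  s_defined : ∀ a b : A, (pap app (pap app (some s) (some a)) (some b)).isSome
  s_spec : ∀ a b c : A,
    pap app (pap app (pap app (some s) (some a)) (some b)) (some c)
      = pap app (pap app (some a) (some c)) (pap app (some b) (some c))

namespace PCA
variable {A : Type*}

/-- Application on (possibly undefined) terms. -/
def ap (P : PCA A) (x y : Option A) : Option A := pap P.app x y

def K' (P : PCA A) : Option A := some P.k
def S' (P : PCA A) : Option A := some P.s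
/-- The identity combinator `i = s·k·k`. -/
def i (P : PCA A) : Option A := P.ap (P.ap P.S' P.K') P.K'
/-- `true = k`. -/
def tru (P : PCA A) : Option A := P.K'
/-- `false = k·i`. -/
def fls (P : PCA A) : Option A := P.ap P.K' P.i
/-- Pairing `⟨a,b⟩ = λ*z. z·a·b`, implemented as `s·(s·i·(k·a))·(k·b)`. -/
def pair (P : PCA A) (x y : Option A) : Option A :=
  P.ap (P.ap P.S' (P.ap (P.ap P.S' P.i) (P.ap P.K' x))) (P.ap P.K' y)
/-- Numerals: `0̄ = i`, `(n+1)‾ = ⟨false, n̄⟩`. -/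
def numeral (P : PCA A) : ℕ → Option A
  | 0 => P.i
  | n + 1 => P.pair P.fls (P.numeral n)
/-- An element is total if it is defined on every argument. -/
def total (P : PCA A) (f : A) : Prop := ∀ a : A, (P.app f a).isSome

end PCA

/-- `0̄` and `1̄` are separable in the pca `P`. -/
def PCA.Sep01 {A : Type*} (P : PCA A) : Prop :=
  ∃ c : A, P.total c ∧
    (∀ a : A, P.app c a = P.numeral 0 ∨ P.app c a = P.numeral 1) ∧
    ∀ a : A, (P.app c a = P.numeral 0 → some a ≠ P.numeral 1) ∧
             (P.app c a = P.numeral 1 → some a ≠ P.numeral 0)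

/-!
Diagonalise against the separator `c`: let `b·a ≃ g·(c·(a·a))`, where `g` swaps `0̄` and `1̄`.
If `f` were a total extension of `b`, put `v = f·f`; then `b·f = g·(c·v)` is defined, so
`v = f·f = b·f = g·(c·v)`. But `c·v = 0̄` forces `v ≠ 1̄ = g·(c·v)`, and `c·v = 1̄` forces
`v ≠ 0̄ = g·(c·v)`.
-/

namespace PCA

variable {A : Type*} (P : PCA A)

def IsTotalExtension (f b : A) : Prop :=
  P.total f ∧ ∀ a : A, (P.app b a).isSome → P.app f a = P.app b a

theorem not_isTotalExtension_of_diagonal {b : A} {h : Option A → Option A}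
    (hdef : ∀ v, (h (some v)).isSome) (hne : ∀ v, h (some v) ≠ some v)
    (hb : ∀ a, P.app b a = h (P.app a a)) (f : A) : ¬ P.IsTotalExtension f b := by
  rintro ⟨hf, hext⟩
  obtain ⟨v, hv⟩ := Option.isSome_iff_exists.mp (hf f)
  have hbf : P.app b f = h (some v) := by rw [hb, hv]
  exact hne v <| by rw [← hbf, ← hext f (hbf ▸ hdef v), hv]

variable {P} {x y z : Option A}

lemma isSome_ap_K' (hx : x.isSome) : (P.ap P.K' x).isSome := by
  obtain ⟨a, rfl⟩ := Option.isSome_iff_exists.mp hx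
  cases h : P.app P.k a
  · simpa [ap, K', pap, h] using P.k_spec a a
  · simp [ap, K', pap, h]

lemma ap_ap_K' (hx : x.isSome) (hy : y.isSome) : P.ap (P.ap P.K' x) y = x := by
  obtain ⟨a, rfl⟩ := Option.isSome_iff_exists.mp hx
  obtain ⟨b, rfl⟩ := Option.isSome_iff_exists.mp hy
  exact P.k_spec a b

lemma isSome_ap_ap_S' (hx : x.isSome) (hy : y.isSome) : (P.ap (P.ap P.S' x) y).isSome := by
  obtain ⟨a, rfl⟩ := Option.isSome_iff_exists.mp hx
  obtain ⟨b, rfl⟩ := Option.isSome_iff_exists.mp hy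
  exact P.s_defined a b

lemma ap_ap_ap_S' (hx : x.isSome) (hy : y.isSome) (hz : z.isSome) :
    P.ap (P.ap (P.ap P.S' x) y) z = P.ap (P.ap x z) (P.ap y z) := by
  obtain ⟨a, rfl⟩ := Option.isSome_iff_exists.mp hx
  obtain ⟨b, rfl⟩ := Option.isSome_iff_exists.mp hy
  obtain ⟨c, rfl⟩ := Option.isSome_iff_exists.mp hz
  exact P.s_spec a b c

variable (P) in
lemma isSome_i : P.i.isSome := isSome_ap_ap_S' rfl rfl

lemma ap_i (hx : x.isSome) : P.ap P.i x = x := by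
  rw [i, ap_ap_ap_S' rfl rfl hx, ap_ap_K' hx (isSome_ap_K' hx)]

variable (P) in
lemma isSome_fls : P.fls.isSome := isSome_ap_K' (isSome_i P)

lemma ap_fls (hx : x.isSome) : P.ap P.fls x = P.i := ap_ap_K' (isSome_i P) hx

lemma isSome_pair (hx : x.isSome) (hy : y.isSome) : (P.pair x y).isSome :=
  isSome_ap_ap_S' (isSome_ap_ap_S' (isSome_i P) (isSome_ap_K' hx)) (isSome_ap_K' hy)

lemma ap_pair (hx : x.isSome) (hy : y.isSome) (hz : z.isSome) :
    P.ap (P.pair x y) z = P.ap (P.ap z x) y := by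
  rw [pair, ap_ap_ap_S' (isSome_ap_ap_S' (isSome_i P) (isSome_ap_K' hx)) (isSome_ap_K' hy) hz,
    ap_ap_ap_S' (isSome_i P) (isSome_ap_K' hx) hz, ap_i hz, ap_ap_K' hx hz, ap_ap_K' hy hz]

variable (P) in
lemma isSome_numeral (n : ℕ) : (P.numeral n).isSome := by
  induction n with
  | zero => exact isSome_i P
  | succ n ih => exact isSome_pair (isSome_fls P) ih

lemma ap_numeral_zero (hz : z.isSome) : P.ap (P.numeral 0) z = z := ap_i hz

lemma ap_numeral_succ (n : ℕ) (hz : z.isSome) :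
    P.ap (P.numeral (n + 1)) z = P.ap (P.ap z P.fls) (P.numeral n) :=
  ap_pair (isSome_fls P) (isSome_numeral P n) hz

/-- `g·x ≃ x·(k·1̄)·0̄`; on `0̄ = i` this returns `k·1̄·0̄ = 1̄`, on `1̄ = ⟨false, 0̄⟩` it
returns `(k·1̄·false·0̄)·0̄ = 0̄·false·0̄·0̄ = 0̄`. -/
def swap01 (P : PCA A) : Option A := P.pair (P.ap P.K' (P.numeral 1)) (P.numeral 0)

variable (P) in
lemma isSome_swap01 : P.swap01.isSome :=
  isSome_pair (isSome_ap_K' (isSome_numeral P 1)) (isSome_numeral P 0)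

lemma ap_swap01 (hz : z.isSome) :
    P.ap P.swap01 z = P.ap (P.ap z (P.ap P.K' (P.numeral 1))) (P.numeral 0) :=
  ap_pair (isSome_ap_K' (isSome_numeral P 1)) (isSome_numeral P 0) hz

variable (P) in
lemma ap_swap01_numeral_zero : P.ap P.swap01 (P.numeral 0) = P.numeral 1 := by
  have h1 := isSome_numeral P 1
  rw [ap_swap01 (isSome_numeral P 0), ap_numeral_zero (isSome_ap_K' h1),
    ap_ap_K' h1 (isSome_numeral P 0)]

variable (P) in
lemma ap_swap01_numeral_one : P.ap P.swap01 (P.numeral 1) = P.numeral 0 := by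
  have h0 := isSome_numeral P 0
  have h1 := isSome_numeral P 1
  rw [ap_swap01 h1, ap_numeral_succ 0 (isSome_ap_K' h1), ap_ap_K' h1 (isSome_fls P),
    ap_numeral_succ 0 h0, ap_numeral_zero (isSome_fls P), ap_fls h0, ← numeral,
    ap_numeral_zero h0]

def comp (P : PCA A) (x y : Option A) : Option A := P.ap (P.ap P.S' (P.ap P.K' x)) y

lemma isSome_comp (hx : x.isSome) (hy : y.isSome) : (P.comp x y).isSome :=
  isSome_ap_ap_S' (isSome_ap_K' hx) hy

lemma ap_comp (hx : x.isSome) (hy : y.isSome) (hz : z.isSome) :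
    P.ap (P.comp x y) z = P.ap x (P.ap y z) := by
  rw [comp, ap_ap_ap_S' (isSome_ap_K' hx) hy hz, ap_ap_K' hx hz]

def selfApp (P : PCA A) : Option A := P.ap (P.ap P.S' P.i) P.i

variable (P) in
lemma isSome_selfApp : P.selfApp.isSome := isSome_ap_ap_S' (isSome_i P) (isSome_i P)

lemma ap_selfApp (a : A) : P.ap P.selfApp (some a) = P.app a a := by
  rw [selfApp, ap_ap_ap_S' (isSome_i P) (isSome_i P) rfl, ap_i rfl]
  rfl

lemma exists_app_eq_ap_ap_self (hx : x.isSome) (hy : y.isSome) :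
    ∃ b : A, ∀ a, P.app b a = P.ap x (P.ap y (P.app a a)) := by
  have hyd : (P.comp y P.selfApp).isSome := isSome_comp hy (isSome_selfApp P)
  obtain ⟨b, hb⟩ := Option.isSome_iff_exists.mp (isSome_comp (P := P) hx hyd)
  refine ⟨b, fun a => ?_⟩
  rw [← ap_selfApp, ← ap_comp hy (isSome_selfApp P) rfl, ← ap_comp hx hyd rfl, hb]
  rfl

lemma ap_swap01_separator {c : A}
    (hval : ∀ a, P.app c a = P.numeral 0 ∨ P.app c a = P.numeral 1)
    (hsep : ∀ a, (P.app c a = P.numeral 0 → some a ≠ P.numeral 1) ∧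
      (P.app c a = P.numeral 1 → some a ≠ P.numeral 0)) (v : A) :
    (P.ap P.swap01 (P.app c v)).isSome ∧ P.ap P.swap01 (P.app c v) ≠ some v := by
  rcases hval v with h0 | h1
  · rw [h0, ap_swap01_numeral_zero]
    exact ⟨isSome_numeral P 1, ((hsep v).1 h0).symm⟩
  · rw [h1, ap_swap01_numeral_one]
    exact ⟨isSome_numeral P 0, ((hsep v).2 h1).symm⟩

end PCA

/-- If `0̄`,`1̄` are separable in a pca, some element has no total extension. -/
theorem exists_element_without_total_extension {A : Type*} (P : PCA A)
    (hsep : P.Sep01) :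
    ∃ b : A, ¬ ∃ f : A, P.total f ∧
      ∀ a : A, (P.app b a).isSome → P.app f a = P.app b a := by
  obtain ⟨c, -, hval, hsep⟩ := hsep
  have hswap := P.ap_swap01_separator hval hsep
  obtain ⟨b, hb⟩ := P.exists_app_eq_ap_ap_self P.isSome_swap01 (y := some c) rfl
  exact ⟨b, fun ⟨f, hf⟩ => P.not_isTotalExtension_of_diagonal
    (h := fun x => P.ap P.swap01 (P.ap (some c) x)) (fun v => (hswap v).1) (fun v => (hswap v).2)
    hb f hf⟩
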